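/- Let M, a, s be positive integers with M > 1 such that ∑_{i=0}^{M-1} (a+i)^2 = s^2. If M = 24·m₁ + 16 for a nonnegative integer m₁, then for every integer i ≥ 2 one has m₁ ≢ 2·(2^(2i-4) − 1)/3 (mod 2^(2i-2)). (For i ≥ 2, 2^(2i-4) − 1 is divisible by 3, so this residue is an integer.) -/

import Mathlib

/-!
Summing the squares gives `6 s² = M (6a² + 6a(M-1) + (M-1)(2M-1))`, and for even `M` the second
factor is odd, so `v₂(M) = v₂(6 s²) = 1 + 2 v₂(s)` is odd. The excluded residues of `m₁` are exactly
those with `24 m₁ + 16 ≡ 2^(2i) (mod 2^(2i+1))`, i.e. with `v₂(M) = 2i`.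
-/

open Finset

theorem six_mul_sum_range_succ_add_sq (a n : ℕ) :
    6 * ∑ i ∈ range (n + 1), (a + i) ^ 2 =
      (n + 1) * (6 * a ^ 2 + 6 * a * n + n * (2 * n + 1)) := by
  induction n with
  | zero => simp
  | succ n ih =>
    rw [sum_range_succ, mul_add, ih]
    ring

theorem padicValNat_eq_of_modEq_prime_pow {p n k : ℕ} [hp : Fact p.Prime]
    (h : n ≡ p ^ k [MOD p ^ (k + 1)]) : padicValNat p n = k := by
  have hlt : p ^ k < p ^ (k + 1) := Nat.pow_lt_pow_right hp.out.one_lt k.lt_succ_self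
  have hmod : n % p ^ (k + 1) = p ^ k := by rw [h, Nat.mod_eq_of_lt hlt]
  have hn : n = p ^ k * (p * (n / p ^ (k + 1)) + 1) := by
    conv_lhs => rw [← Nat.div_add_mod n (p ^ (k + 1)), hmod]
    ring
  have hcop : ¬p ∣ p * (n / p ^ (k + 1)) + 1 := by
    rw [Nat.dvd_add_right (dvd_mul_right _ _), Nat.dvd_one]
    exact hp.out.ne_one
  rw [hn, padicValNat.mul (pow_ne_zero _ hp.out.ne_zero) (by omega), padicValNat.prime_pow,
    padicValNat.eq_zero_of_not_dvd hcop, add_zero]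

theorem odd_padicValNat_two_of_sum_range_sq_eq_sq {n a s : ℕ} (hn : Even n) (hn0 : n ≠ 0)
    (h : ∑ i ∈ range n, (a + i) ^ 2 = s ^ 2) : Odd (padicValNat 2 n) := by
  obtain ⟨m, rfl⟩ := Nat.exists_eq_add_one_of_ne_zero hn0
  set X := 6 * a ^ 2 + 6 * a * m + m * (2 * m + 1)
  have hX : Odd X := by
    have hm : Odd m := by simpa [Nat.even_add_one] using hn
    exact Even.add_odd ⟨3 * a ^ 2 + 3 * a * m, by ring⟩ (hm.mul (odd_two_mul_add_one m))
  have hsX : 2 * (3 * s ^ 2) = (m + 1) * X := by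
    rw [← six_mul_sum_range_succ_add_sq, h]
    ring
  have hs : s ≠ 0 := by
    rintro rfl
    simp [hX.pos.ne'] at hsX
  have hval := congrArg (padicValNat 2) hsX
  rw [padicValNat.mul two_ne_zero (by positivity), padicValNat.mul three_ne_zero (by positivity),
    padicValNat.mul (by positivity) hX.pos.ne', padicValNat.pow, padicValNat_self,
    padicValNat.eq_zero_of_not_dvd (by decide : ¬2 ∣ 3),
    padicValNat.eq_zero_of_not_dvd hX.not_two_dvd_nat] at hval
  exact ⟨padicValNat 2 s, by omega⟩

theorem twentyfour_mul_add_sixteen_modEq_two_pow {m k : ℕ}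
    (h : m ≡ 2 * (2 ^ (2 * k) - 1) / 3 [MOD 2 ^ (2 * k + 2)]) :
    24 * m + 16 ≡ 2 ^ (2 * k + 4) [MOD 2 ^ (2 * k + 5)] := by
  obtain ⟨c, hc⟩ : 3 ∣ 2 ^ (2 * k) - 1 := by
    simpa [pow_mul] using Nat.sub_dvd_pow_sub_pow 4 1 k
  have hpow : 2 ^ (2 * k + 4) = 24 * (2 * c) + 16 := by
    have : 1 ≤ 2 ^ (2 * k) := Nat.one_le_two_pow
    rw [pow_add]
    omega
  rw [hc, show 2 * (3 * c) / 3 = 2 * c by omega] at h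
  rw [hpow]
  exact Nat.ModEq.of_dvd ⟨3, by ring⟩ ((h.mul_left' 24).add_right 16)

theorem stmt_general (M a s m₁ : ℕ)
    (hsum : ∑ i ∈ Finset.range M, (a + i) ^ 2 = s ^ 2)
    (hMeq : M = 24 * m₁ + 16) :
    ∀ i : ℕ, 2 ≤ i → ¬ m₁ ≡ 2 * (2 ^ (2 * i - 4) - 1) / 3 [MOD 2 ^ (2 * i - 2)] := by
  intro i hi hm₁
  obtain ⟨k, rfl⟩ := Nat.exists_eq_add_of_le' hi
  rw [show 2 * (k + 2) - 4 = 2 * k by omega, show 2 * (k + 2) - 2 = 2 * k + 2 by omega] at hm₁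
  have hval : padicValNat 2 M = 2 * k + 4 := by
    subst hMeq
    exact padicValNat_eq_of_modEq_prime_pow (twentyfour_mul_add_sixteen_modEq_two_pow hm₁)
  have hodd := odd_padicValNat_two_of_sum_range_sq_eq_sq ⟨12 * m₁ + 8, by omega⟩ (by omega) hsum
  rw [hval] at hodd
  exact Nat.not_odd_iff_even.mpr ⟨k + 2, by ring⟩ hodd

theorem stmt (M a s m₁ : ℕ) (hM : 1 < M) (ha : 1 ≤ a) (hs : 1 ≤ s)
    (hsum : ∑ i ∈ Finset.range M, (a + i) ^ 2 = s ^ 2)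
    (hMeq : M = 24 * m₁ + 16) :
    ∀ i : ℕ, 2 ≤ i → ¬ m₁ ≡ 2 * (2 ^ (2 * i - 4) - 1) / 3 [MOD 2 ^ (2 * i - 2)] :=
  stmt_general M a s m₁ hsum hMeq
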